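/- The mean squared quantization error of a Laplace(Λ) source under uniform scalar quantization with step Q, defined by D(Λ,Q) = ∫_{-Q/2}^{Q/2} x² (Λ/2)e^{-Λ|x|}dx + 2∑_{i=1}^∞ ∫_{iQ-Q/2}^{iQ+Q/2} (x-iQ)² (Λ/2)e^{-Λ|x|}dx, equals [2 - (1/4)e^{-ΛQ/2}(Λ²Q²+4ΛQ+8)]/Λ² + [(-ΛQ(ΛQ+4) + e^{ΛQ}(ΛQ(ΛQ-4)+8) - 8)/(4Λ²)]·e^{-3ΛQ/2}/(1-e^{-ΛQ}). -/

import Mathlib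

/-!
On the cell centred at `c = (i + 1) Q` the density is `e^{-Λc}` times its translate to the
origin, so every outer cell contributes `e^{-(i+1)ΛQ} ∫_{-Q/2}^{Q/2} u² e^{-Λu} du` and the
series is geometric; the central cell is twice a one-sided integral by evenness. Both integrals
are evaluated with the antiderivative `-(x²/Λ + 2x/Λ² + 2/Λ³) e^{-Λx}` of `x² e^{-Λx}`, after
which everything is a rational function of `t = e^{-ΛQ/2}`.
-/

open Real intervalIntegral

theorem integral_neg_self_eq_two_mul_of_even {f : ℝ → ℝ} (hf : Continuous f)
    (heven : ∀ x, f (-x) = f x) (h : ℝ) :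
    ∫ x in (-h)..h, f x = 2 * ∫ x in (0 : ℝ)..h, f x := by
  have hneg : ∫ x in (-h)..0, f x = ∫ x in (0 : ℝ)..h, f x := by
    simpa only [heven, neg_zero] using (integral_comp_neg (a := 0) (b := h) f).symm
  rw [← integral_add_adjacent_intervals (hf.intervalIntegrable _ 0) (hf.intervalIntegrable 0 _),
    hneg, two_mul]

noncomputable def sqMulExpAntideriv (Λ x : ℝ) : ℝ :=
  -((x ^ 2 / Λ + 2 * x / Λ ^ 2 + 2 / Λ ^ 3) * exp (-Λ * x))

theorem hasDerivAt_sqMulExpAntideriv {Λ : ℝ} (hΛ : Λ ≠ 0) (x : ℝ) :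
    HasDerivAt (sqMulExpAntideriv Λ) (x ^ 2 * exp (-Λ * x)) x := by
  have hexp : HasDerivAt (fun x => exp (-Λ * x)) (exp (-Λ * x) * -Λ) x :=
    ((hasDerivAt_id x).const_mul (-Λ)).exp.congr_deriv (by simp)
  have hpoly : HasDerivAt (fun x => x ^ 2 / Λ + 2 * x / Λ ^ 2 + 2 / Λ ^ 3)
      (2 * x / Λ + 2 / Λ ^ 2) x :=
    ((((hasDerivAt_pow 2 x).div_const Λ).add
      (((hasDerivAt_id x).const_mul 2).div_const (Λ ^ 2))).add_const (2 / Λ ^ 3)).congr_deriv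
      (by simp)
  refine (hpoly.mul hexp).neg.congr_deriv ?_
  field_simp
  ring

theorem integral_sq_mul_exp_neg_mul {Λ : ℝ} (hΛ : Λ ≠ 0) (a b : ℝ) :
    ∫ x in a..b, x ^ 2 * exp (-Λ * x) = sqMulExpAntideriv Λ b - sqMulExpAntideriv Λ a :=
  integral_eq_sub_of_hasDerivAt (fun x _ => hasDerivAt_sqMulExpAntideriv hΛ x)
    ((by fun_prop : Continuous fun x : ℝ => x ^ 2 * exp (-Λ * x)).intervalIntegrable a b)

theorem integral_sq_sub_mul_exp_neg_mul_abs {Λ c h : ℝ} (hh : 0 ≤ h) (hhc : h ≤ c) :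
    ∫ x in (c - h)..(c + h), (x - c) ^ 2 * exp (-Λ * |x|) =
      exp (-Λ * c) * ∫ u in (-h)..h, u ^ 2 * exp (-Λ * u) := by
  have habs : Set.EqOn (fun x => (x - c) ^ 2 * exp (-Λ * |x|))
      (fun x => (x - c) ^ 2 * exp (-Λ * x)) (Set.uIcc (c - h) (c + h)) := by
    intro x hx
    rw [Set.uIcc_of_le (by linarith)] at hx
    simp only [abs_of_nonneg (by linarith [hx.1] : 0 ≤ x)]
  rw [integral_congr habs, ← integral_const_mul, sub_eq_add_neg c h,
    ← integral_comp_add_left (fun x => (x - c) ^ 2 * exp (-Λ * x)) c]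
  congr 1 with u
  rw [add_sub_cancel_left, mul_add, exp_add]
  ring

theorem integral_sq_mul_exp_neg_mul_abs {Λ h : ℝ} (hh : 0 ≤ h) :
    ∫ x in (-h)..h, x ^ 2 * exp (-Λ * |x|) = 2 * ∫ x in (0 : ℝ)..h, x ^ 2 * exp (-Λ * x) := by
  rw [integral_neg_self_eq_two_mul_of_even (by fun_prop) (by simp) h]
  congr 1
  refine integral_congr fun x hx => ?_
  rw [Set.uIcc_of_le hh] at hx
  simp only [abs_of_nonneg hx.1]

theorem tsum_exp_neg_succ_mul {a : ℝ} (ha : 0 < a) :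
    ∑' i : ℕ, exp (-(((i : ℝ) + 1) * a)) = exp (-a) / (1 - exp (-a)) := by
  have hpow (i : ℕ) : exp (-(((i : ℝ) + 1) * a)) = exp (-a) * exp (-a) ^ i := by
    rw [← exp_nat_mul, ← exp_add]
    ring_nf
  rw [tsum_congr hpow, tsum_mul_left, tsum_geometric_of_lt_one (exp_pos _).le
    (exp_lt_one_iff.mpr (neg_lt_zero.mpr ha)), div_eq_mul_inv]

theorem laplace_quantizer_distortion_closed_form (Λ Q : ℝ) (hΛ : 0 < Λ) (hQ : 0 < Q) :
    (∫ x in (-(Q / 2))..(Q / 2), x ^ 2 * ((Λ / 2) * Real.exp (-Λ * |x|)))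
      + 2 * ∑' i : ℕ,
          ∫ x in (((i : ℝ) + 1) * Q - Q / 2)..(((i : ℝ) + 1) * Q + Q / 2),
            (x - ((i : ℝ) + 1) * Q) ^ 2 * ((Λ / 2) * Real.exp (-Λ * |x|))
    = (2 - (1 / 4) * Real.exp (-Λ * Q / 2) * (Λ ^ 2 * Q ^ 2 + 4 * (Λ * Q) + 8)) / Λ ^ 2
      + ((-(Λ * Q) * (Λ * Q + 4) + Real.exp (Λ * Q) * ((Λ * Q) * (Λ * Q - 4) + 8) - 8)
            / (4 * Λ ^ 2))
          * (Real.exp (-(3 / 2) * (Λ * Q)) / (1 - Real.exp (-Λ * Q))) := by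
  have hcell (i : ℕ) : ∫ x in (((i : ℝ) + 1) * Q - Q / 2)..(((i : ℝ) + 1) * Q + Q / 2),
      (x - ((i : ℝ) + 1) * Q) ^ 2 * exp (-Λ * |x|) =
        exp (-(((i : ℝ) + 1) * (Λ * Q))) * ∫ u in (-(Q / 2))..(Q / 2), u ^ 2 * exp (-Λ * u) := by
    rw [integral_sq_sub_mul_exp_neg_mul_abs (by positivity) (by nlinarith [i.cast_nonneg' (α := ℝ)])]
    congr 2
    ring
  simp only [mul_left_comm _ (Λ / 2), integral_const_mul, hcell]
  rw [integral_sq_mul_exp_neg_mul_abs (by positivity), tsum_mul_left, tsum_mul_right,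
    tsum_exp_neg_succ_mul (by positivity), integral_sq_mul_exp_neg_mul hΛ.ne',
    integral_sq_mul_exp_neg_mul hΛ.ne']
  unfold sqMulExpAntideriv
  set t := exp (-(Λ * Q) / 2) with ht
  have hexp (k : ℤ) (c : ℝ) (hc : c = k * (-(Λ * Q) / 2)) : exp c = t ^ k := by
    rw [hc, ht, mul_comm, exp_mul, rpow_intCast]
  rw [mul_zero (-Λ), exp_zero, hexp 1 (-Λ * (Q / 2)) (by push_cast; ring),
    hexp (-1) (-Λ * -(Q / 2)) (by push_cast; ring), hexp 2 (-(Λ * Q)) (by push_cast; ring),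
    hexp 2 (-Λ * Q) (by push_cast; ring), hexp (-2) (Λ * Q) (by push_cast; ring),
    hexp 3 (-(3 / 2) * (Λ * Q)) (by push_cast; ring), hexp 1 (-Λ * Q / 2) (by push_cast; ring)]
  simp only [zpow_neg, zpow_ofNat]
  have ht1 : t < 1 := exp_lt_one_iff.mpr (by nlinarith [mul_pos hΛ hQ])
  have ht0 : 0 < t := exp_pos _
  have h1t : 1 - t ^ 2 ≠ 0 := by nlinarith
  field_simp
  ring
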